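/- arXiv:1811.07052 — 5 statements merged into one kernel-verified Lean document; each statement's English description precedes it below -/
import Mathlib

section
/- Let p ≥ 3 be an odd integer, q ≥ 3 an even integer, and d = gcd(p,q). Then the smallest positive integer k' such that 2p divides k'·q·(p−2) equals p/d. -/
theorem stmt_5 (p q : ℕ) (hp : 3 ≤ p) (hq : 3 ≤ q) (hpo : Odd p) (hqe : Even q) :
    IsLeast {k : ℕ | 0 < k ∧ 2 * p ∣ k * (q * (p - 2))} (p / Nat.gcd p q) := by
  set d := Nat.gcd p q with hd
  have hp0 : 0 < p := by omega
  have hq0 : 0 < q := by omega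
  have hdp : d ∣ p := Nat.gcd_dvd_left p q
  have hdq : d ∣ q := Nat.gcd_dvd_right p q
  have hd0 : 0 < d := Nat.gcd_pos_of_pos_left q hp0
  have hdodd : Odd d := hpo.of_dvd_nat hdp
  -- coprime p (p-2)
  have hcop2 : Nat.Coprime p (p - 2) := by
    have hg : Nat.gcd p (p - 2) ∣ 2 := by
      have h1 := Nat.gcd_dvd_left p (p - 2)
      have h2 := Nat.gcd_dvd_right p (p - 2)
      have := Nat.dvd_sub h1 h2
      simpa [Nat.sub_sub_self (by omega : 2 ≤ p)] using this
    rcases (Nat.dvd_prime Nat.prime_two).mp hg with h | h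
    · exact h
    · exfalso
      have : 2 ∣ p := h ▸ Nat.gcd_dvd_left p (p - 2)
      exact (Nat.not_even_iff_odd.mpr hpo) (even_iff_two_dvd.mpr this)
  -- 2*d ∣ q
  have h2d : 2 * d ∣ q := by
    obtain ⟨m, hm⟩ := hqe
    have hq2 : q = 2 * m := by omega
    have hnd : ¬ 2 ∣ d := by rw [← even_iff_two_dvd]; exact Nat.not_even_iff_odd.mpr hdodd
    have hcd2 : Nat.Coprime d 2 :=
      Nat.coprime_comm.mp ((Nat.Prime.coprime_iff_not_dvd Nat.prime_two).mpr hnd)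
    have hdm : d ∣ m := (Nat.Coprime.dvd_of_dvd_mul_left hcd2) (hq2 ▸ hdq)
    obtain ⟨t, ht⟩ := hdm
    exact ⟨t, by rw [hq2, ht]; ring⟩
  constructor
  · refine ⟨Nat.div_pos (Nat.le_of_dvd hp0 hdp) hd0, ?_⟩
    obtain ⟨s, hs⟩ := h2d
    refine ⟨s * (p - 2), ?_⟩
    have hk : p / d * (2 * d) = 2 * p := by
      rw [mul_comm 2 d, ← mul_assoc, Nat.div_mul_cancel hdp, mul_comm]
    calc p / d * (q * (p - 2)) = (p / d * (2 * d)) * (s * (p - 2)) := by rw [hs]; ring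
    _ = 2 * p * (s * (p - 2)) := by rw [hk]
  · rintro k ⟨hk0, hkd⟩
    have hppkq : p ∣ k * q := by
      have h1 : p ∣ (k * q) * (p - 2) := by
        have hp2 : p ∣ 2 * p := ⟨2, by ring⟩
        have := hp2.trans hkd
        rwa [← mul_assoc] at this
      exact (Nat.Coprime.dvd_of_dvd_mul_right hcop2) h1
    have hcop : Nat.Coprime (p / d) (q / d) := Nat.coprime_div_gcd_div_gcd hd0
    have h2 : (p / d) * d ∣ (k * (q / d)) * d := by
      rw [Nat.div_mul_cancel hdp, mul_assoc, Nat.div_mul_cancel hdq]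
      exact hppkq
    have h3 : p / d ∣ k * (q / d) := (Nat.mul_dvd_mul_iff_right hd0).mp h2
    exact Nat.le_of_dvd hk0 (hcop.dvd_of_dvd_mul_right h3)
end

section
/- Let p ≥ 4 with p ≡ 0 mod 4, let q ≥ 3 be any integer, and let d = gcd(p,q). Then the smallest positive integer k' such that 2p divides k'·q·(p−2) equals p/d. -/
theorem stmt_6 (p q : ℕ) (hp : 4 ≤ p) (hp4 : p % 4 = 0) (hq : 3 ≤ q) :
    IsLeast {k : ℕ | 0 < k ∧ 2 * p ∣ k * (q * (p - 2))} (p / Nat.gcd p q) := by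
  obtain ⟨m, rfl⟩ : 4 ∣ p := Nat.dvd_of_mod_eq_zero hp4
  have hm : 1 ≤ m := by omega
  set d := Nat.gcd (4 * m) q with hd
  have hdpos : 0 < d := Nat.gcd_pos_of_pos_left q (by omega)
  have hdp : d ∣ 4 * m := Nat.gcd_dvd_left _ _
  have hq' : d ∣ q := Nat.gcd_dvd_right _ _
  have hcop : Nat.Coprime (4 * m) (2 * m - 1) := by
    have hb : (2 * m - 1) * (2 * m - 1) = 4 * m * (m - 1) + 1 := by
      obtain ⟨t, rfl⟩ := Nat.exists_eq_add_of_le hm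
      have e1 : 2 * (1 + t) - 1 = 2 * t + 1 := by omega
      have e2 : 1 + t - 1 = t := by omega
      rw [e1, e2]; ring
    have h1 := Nat.gcd_dvd_left (4 * m) (2 * m - 1)
    have h2 := Nat.gcd_dvd_right (4 * m) (2 * m - 1)
    have hdvd1 : Nat.gcd (4 * m) (2 * m - 1) ∣ 1 := by
      have := Nat.dvd_sub (h2.mul_right (2 * m - 1)) (h1.mul_right (m - 1))
      rwa [hb, Nat.add_sub_cancel_left] at this
    exact Nat.dvd_one.mp hdvd1
  -- key: 2*(4m) ∣ k*(q*(4m-2)) ↔ (4m)/d ∣ k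
  have key : ∀ k : ℕ, (2 * (4 * m) ∣ k * (q * (4 * m - 2)) ↔ 4 * m / d ∣ k) := by
    intro k
    have h1 : k * (q * (4 * m - 2)) = 2 * (k * q * (2 * m - 1)) := by
      have : 4 * m - 2 = 2 * (2 * m - 1) := by omega
      rw [this]; ring
    rw [h1, Nat.mul_dvd_mul_iff_left (by norm_num : 0 < 2)]
    have e1 : 4 * m = d * (4 * m / d) := (Nat.mul_div_cancel' hdp).symm
    have e2 : d * (k * (q / d)) = k * q := by
      rw [mul_comm d, mul_assoc, Nat.div_mul_cancel hq']
    constructor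
    · intro h
      have h2 : 4 * m ∣ k * q := (Nat.Coprime.dvd_of_dvd_mul_right hcop) h
      have h3 : d * (4 * m / d) ∣ d * (k * (q / d)) := by
        rw [← e1, e2]; exact h2
      have h4 : 4 * m / d ∣ k * (q / d) := (Nat.mul_dvd_mul_iff_left hdpos).mp h3
      exact (Nat.Coprime.dvd_of_dvd_mul_right
        (Nat.coprime_div_gcd_div_gcd (m := 4 * m) (n := q) hdpos)) h4
    · intro h
      have : 4 * m ∣ k * q := by
        calc 4 * m = (4 * m / d) * d := (Nat.div_mul_cancel hdp).symm
          _ ∣ k * q := mul_dvd_mul h hq'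
      exact this.mul_right _
  constructor
  · refine ⟨Nat.div_pos (Nat.le_of_dvd (by omega) hdp) hdpos, ?_⟩
    exact (key _).mpr dvd_rfl
  · rintro k ⟨hk, hdvd⟩
    exact Nat.le_of_dvd hk ((key k).mp hdvd)
end

section
/- Let p ≥ 6 with p ≡ 2 mod 4, let q ≥ 3 be odd, and let d = gcd(p,q). Then the smallest positive integer k' such that 2p divides k'·q·(p−2) equals p/(2d). -/
theorem stmt_7 (p q : ℕ) (hp : 6 ≤ p) (hp4 : p % 4 = 2) (hq : 3 ≤ q) (hqo : Odd q) :
    IsLeast {k : ℕ | 0 < k ∧ 2 * p ∣ k * (q * (p - 2))} (p / (2 * Nat.gcd p q)) := by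
  set s := p / 4 with hsdef
  have hs : p = 4 * s + 2 := by omega
  set m := 2 * s + 1 with hmdef
  have hpm : p = 2 * m := by omega
  have hq2 : Nat.Coprime 2 q := by
    rcases hqo with ⟨j, hj⟩
    subst hj
    simp [Nat.coprime_two_left, Nat.odd_iff]
  have hd : Nat.gcd p q = Nat.gcd m q := by
    rw [hpm]; exact Nat.Coprime.gcd_mul_left_cancel m hq2
  set d := Nat.gcd m q with hddef
  have hdq : d ∣ q := Nat.gcd_dvd_right m q
  have hdm : d ∣ m := Nat.gcd_dvd_left m q
  have hdpos : 0 < d := Nat.gcd_pos_of_pos_left q (by omega)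
  have hkey : p / (2 * Nat.gcd p q) = m / d := by
    rw [hd, hpm, Nat.mul_div_mul_left _ _ (by norm_num)]
  rw [hkey]
  have hp2 : p - 2 = 4 * s := by omega
  have h1 : m / d * q = m * (q / d) := by
    conv_lhs => rw [← Nat.div_mul_cancel hdq]
    rw [← mul_assoc, mul_right_comm, Nat.div_mul_cancel hdm]
  constructor
  · refine ⟨Nat.div_pos (Nat.le_of_dvd (by omega) hdm) hdpos, ?_⟩
    have heq : (m / d) * (q * (p - 2)) = (2 * p) * ((q / d) * s) := by
      calc m / d * (q * (p - 2)) = (m / d * q) * (p - 2) := by ring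
        _ = m * (q / d) * (4 * s) := by rw [h1, hp2]
        _ = (2 * p) * ((q / d) * s) := by rw [hpm]; ring
    rw [heq]
    exact Dvd.intro _ rfl
  · rintro k ⟨hk, hdvd⟩
    have h4 : 4 * m ∣ 4 * (k * q * s) := by
      have heq : k * (q * (p - 2)) = 4 * (k * q * s) := by rw [hp2]; ring
      have hpe : 2 * p = 4 * m := by omega
      rw [heq, hpe] at hdvd
      exact hdvd
    have hm1 : m ∣ k * q * s := (Nat.mul_dvd_mul_iff_left (by norm_num : (0:ℕ) < 4)).mp h4
    have hcop : Nat.Coprime m s := by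
      have : Nat.gcd m s = Nat.gcd 1 s := by
        rw [show m = 1 + s * 2 by omega, Nat.gcd_add_mul_left_left]
      simpa [Nat.Coprime] using this
    have hm2 : m ∣ k * q := hcop.dvd_of_dvd_mul_right hm1
    have he : m / d ∣ k * (q / d) := by
      have h3 : d * (m / d) ∣ d * (k * (q / d)) := by
        rw [Nat.mul_div_cancel' hdm, show d * (k * (q / d)) = k * (d * (q / d)) by ring,
          Nat.mul_div_cancel' hdq]
        exact hm2
      exact (Nat.mul_dvd_mul_iff_left hdpos).mp h3
    have hcop2 : Nat.Coprime (m / d) (q / d) := Nat.coprime_div_gcd_div_gcd hdpos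
    exact Nat.le_of_dvd hk (hcop2.dvd_of_dvd_mul_right he)
end

section
/- Let p ≥ 6 with p ≡ 2 mod 4, let q ≥ 3 be even, and let d = gcd(p,q). Then the smallest positive integer k' such that 2p divides k'·q·(p−2) equals p/d. -/
theorem stmt_8 (p q : ℕ) (hp : 6 ≤ p) (hp4 : p % 4 = 2) (hq : 3 ≤ q) (hqe : Even q) :
    IsLeast {k : ℕ | 0 < k ∧ 2 * p ∣ k * (q * (p - 2))} (p / Nat.gcd p q) := by
  obtain ⟨m, hm⟩ : ∃ m, p = 2 * m := ⟨p / 2, by omega⟩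
  obtain ⟨n, hn⟩ : ∃ n, q = 2 * n := by
    obtain ⟨n, hn⟩ := hqe; exact ⟨n, by omega⟩
  have hm3 : 3 ≤ m := by omega
  have hn2 : 2 ≤ n := by omega
  subst hm hn
  set g := Nat.gcd m n with hg
  have hgpos : 0 < g := Nat.gcd_pos_of_pos_left n (by omega)
  have hgcd : Nat.gcd (2 * m) (2 * n) = 2 * g := Nat.gcd_mul_left 2 m n
  obtain ⟨a, ha⟩ := Nat.gcd_dvd_left m n
  obtain ⟨b, hb⟩ := Nat.gcd_dvd_right m n
  rw [← hg] at ha hb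
  have haq : m / g = a := by rw [ha]; exact Nat.mul_div_cancel_left a hgpos
  have hbq : n / g = b := by rw [hb]; exact Nat.mul_div_cancel_left b hgpos
  have hcop : Nat.Coprime a b := by
    rw [← haq, ← hbq]; exact Nat.coprime_div_gcd_div_gcd hgpos
  have hdiv : 2 * m / Nat.gcd (2 * m) (2 * n) = a := by
    rw [hgcd, ha, show 2 * (g * a) = (2 * g) * a by ring]
    exact Nat.mul_div_cancel_left a (by omega)
  rw [hdiv]
  have hapos : 0 < a := by
    rcases Nat.eq_zero_or_pos a with h | h
    · subst h; simp at ha; omega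
    · exact h
  have hsub : 2 * m - 2 = 2 * (m - 1) := by omega
  constructor
  · refine ⟨hapos, ?_⟩
    rw [hsub]
    obtain ⟨s, hs⟩ : ∃ s, m - 1 = s := ⟨m - 1, rfl⟩
    rw [hs]
    exact ⟨b * s, by rw [ha, hb]; ring⟩
  · rintro k ⟨hk, hdvd⟩
    rw [hsub] at hdvd
    have e1 : k * (2 * n * (2 * (m - 1))) = 4 * (k * (n * (m - 1))) := by ring
    have e2 : 2 * (2 * m) = 4 * m := by ring
    rw [e1, e2] at hdvd
    have hm1 : m ∣ k * (n * (m - 1)) :=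
      (mul_dvd_mul_iff_left (by norm_num : (4 : ℕ) ≠ 0)).mp hdvd
    have hcop2 : Nat.Coprime m (m - 1) := by
      have h1 : m = (m - 1) + 1 := by omega
      rw [h1]; simp
    have hmkn : m ∣ k * n := by
      have h2 : m ∣ k * n * (m - 1) := by rwa [mul_assoc]
      exact hcop2.dvd_of_dvd_mul_right h2
    have hakb : a ∣ k * b := by
      have h2 : g * a ∣ g * (k * b) := by
        rw [← ha, show g * (k * b) = k * (g * b) by ring, ← hb]
        exact hmkn
      exact (mul_dvd_mul_iff_left hgpos.ne').mp h2
    exact Nat.le_of_dvd hk (hcop.dvd_of_dvd_mul_right hakb)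
end

section
/- Let p ≥ 3, q ≥ 3, m ≥ 1 be integers with d = gcd(p,q), and suppose k is a positive integer with k' ∣ k where k' is the smallest positive integer satisfying 2p ∣ k'·q·(p−2). If p and q are both odd, then (m·k)/2 ≥ mp/d; if p is even, then m·k ≥ mp/d when q is even or 4 ∣ p, and m·k ≥ mp/(2d) when p ≡ 2 mod 4 and q is odd. -/
/-!
Write `g = gcd (2p) (q (p - 2))`. As `2p ∣ k' q (p - 2)` and `k' ∣ k`, also `2p ∣ k g`, so
`2p ≤ k c` for every positive multiple `c` of `g`. Always `g ∣ 4 gcd p q`, because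
`g ∣ 2pq - 2q(p - 2) = 4q`. For `p, q` odd `g` is odd, hence `g ∣ gcd p q`. For `p = 2a`,
`g = 2 gcd (2a) (q (a - 1))`, and `a - 1` is coprime to `a`, and to `2a` when `a` is even;
this gives `g = 2 gcd p q` when `q` is even or `4 ∣ p`.
-/

theorem le_mul_of_dvd_mul_of_gcd_dvd {n x j k c : ℕ} (h : n ∣ j * x) (hjk : j ∣ k)
    (hk : 0 < k) (hc : 0 < c) (hgc : Nat.gcd n x ∣ c) : n ≤ k * c := by
  have hn : n ∣ j * Nat.gcd n x := Nat.gcd_mul_left j n x ▸ Nat.dvd_gcd (dvd_mul_left n j) h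
  exact Nat.le_of_dvd (by positivity) (hn.trans (mul_dvd_mul hjk hgc))

theorem gcd_two_mul_mul_sub_two_dvd_four_mul_gcd {p : ℕ} (q : ℕ) (hp : 2 ≤ p) :
    Nat.gcd (2 * p) (q * (p - 2)) ∣ 4 * Nat.gcd p q := by
  obtain ⟨r, rfl⟩ := Nat.exists_eq_add_of_le' hp
  set g := Nat.gcd (2 * (r + 2)) (q * (r + 2 - 2))
  have h4p : g ∣ 4 * (r + 2) := by
    rw [show 4 * (r + 2) = 2 * (2 * (r + 2)) by ring]
    exact (Nat.gcd_dvd_left _ _).mul_left 2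
  have h4q : g ∣ 4 * q := by
    have h2pq : g ∣ 2 * (r + 2) * q := (Nat.gcd_dvd_left _ _).mul_right q
    have h2q : g ∣ 2 * (q * (r + 2 - 2)) := (Nat.gcd_dvd_right _ _).mul_left 2
    have := Nat.dvd_sub h2pq h2q
    rwa [Nat.add_sub_cancel, show 2 * (r + 2) * q - 2 * (q * r) = 4 * q by
      rw [Nat.sub_eq_iff_eq_add (by nlinarith)]; ring] at this
  rw [← Nat.gcd_mul_left]
  exact Nat.dvd_gcd h4p h4q

theorem gcd_two_mul_mul_sub_two_dvd_gcd_of_odd {p q : ℕ} (hp : Odd p) (hq : Odd q) (h : 2 ≤ p) :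
    Nat.gcd (2 * p) (q * (p - 2)) ∣ Nat.gcd p q := by
  have hodd : Odd (Nat.gcd (2 * p) (q * (p - 2))) :=
    (hq.mul (Nat.Odd.sub_even h hp even_two)).of_dvd_nat (Nat.gcd_dvd_right _ _)
  have hcop : Nat.Coprime (Nat.gcd (2 * p) (q * (p - 2))) (2 ^ 2) :=
    (Nat.coprime_two_right.mpr hodd).pow_right 2
  exact hcop.dvd_of_dvd_mul_left (gcd_two_mul_mul_sub_two_dvd_four_mul_gcd q h)

theorem gcd_two_mul_mul_sub_one_of_even {a : ℕ} (q : ℕ) (ha : Even a) (ha0 : 0 < a) :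
    Nat.gcd (2 * a) (q * (a - 1)) = Nat.gcd (2 * a) q := by
  have h2 : Nat.Coprime (a - 1) 2 := Nat.coprime_two_right.mpr (Nat.Even.sub_odd ha0 ha odd_one)
  have hpred : Nat.Coprime (a - 1) a :=
    (Nat.coprime_self_sub_left ha0).mpr (Nat.coprime_one_left a)
  rw [Nat.gcd_comm, Nat.Coprime.gcd_mul_right_cancel q (h2.mul_right hpred), Nat.gcd_comm]

theorem gcd_two_mul_two_mul_mul_sub_one {a b : ℕ} (ha0 : 0 < a) :
    Nat.gcd (2 * a) (2 * b * (a - 1)) = Nat.gcd (2 * a) (2 * b) := by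
  have hpred : Nat.Coprime (a - 1) a :=
    (Nat.coprime_self_sub_left ha0).mpr (Nat.coprime_one_left a)
  rw [mul_assoc, Nat.gcd_mul_left, Nat.gcd_mul_left, Nat.gcd_comm,
    Nat.Coprime.gcd_mul_right_cancel b hpred, Nat.gcd_comm]

theorem gcd_two_mul_mul_sub_two_of_even {p q : ℕ} (hp : Even p) (h : 2 ≤ p)
    (hq : Even q ∨ 4 ∣ p) : Nat.gcd (2 * p) (q * (p - 2)) = 2 * Nat.gcd p q := by
  obtain ⟨a, rfl⟩ := hp
  have ha0 : 0 < a := by omega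
  have hsub : q * (a + a - 2) = 2 * (q * (a - 1)) := by
    rw [show a + a - 2 = 2 * (a - 1) by omega]; ring
  rw [hsub, Nat.gcd_mul_left, ← two_mul]
  congr 1
  rcases hq with ⟨b, rfl⟩ | h4
  · rw [← two_mul]
    exact gcd_two_mul_two_mul_mul_sub_one ha0
  · exact gcd_two_mul_mul_sub_one_of_even q (by rw [Nat.even_iff]; omega) ha0

theorem mul_div_le_mul_div_two {p k d : ℕ} (m : ℕ) (h : 2 * p ≤ k * d) :
    m * p / d ≤ m * k / 2 := by
  rw [Nat.le_div_iff_mul_le two_pos]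
  calc m * p / d * 2 = 2 * (m * p / d) := mul_comm _ _
    _ ≤ 2 * (m * p) / d := Nat.mul_div_le_mul_div_assoc _ _ _
    _ ≤ m * k := Nat.div_le_of_le_mul (by nlinarith)

theorem stmt_19_general (p q m k k' : ℕ) (hp : 3 ≤ p)
    (hk : 0 < k)
    (hk' : IsLeast {j : ℕ | 0 < j ∧ 2 * p ∣ j * (q * (p - 2))} k')
    (hdvd : k' ∣ k) :
    (Odd p → Odd q → m * k / 2 ≥ m * p / Nat.gcd p q) ∧
    (Even p → (Even q ∨ 4 ∣ p) → m * k ≥ m * p / Nat.gcd p q) ∧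
    (p % 4 = 2 → Odd q → m * k ≥ m * p / (2 * Nat.gcd p q)) := by
  have hp2 : 2 ≤ p := by omega
  have hd : 0 < Nat.gcd p q := Nat.gcd_pos_of_pos_left q (by omega)
  have two_mul_le {c : ℕ} (hc : 0 < c) (hgc : Nat.gcd (2 * p) (q * (p - 2)) ∣ c) :
      2 * p ≤ k * c :=
    le_mul_of_dvd_mul_of_gcd_dvd hk'.1.2 hdvd hk hc hgc
  refine ⟨fun hpo hqo => ?_, fun hpe hcase => ?_, fun _ _ => ?_⟩
  · exact mul_div_le_mul_div_two m
      (two_mul_le hd (gcd_two_mul_mul_sub_two_dvd_gcd_of_odd hpo hqo hp2))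
  · have := two_mul_le (by positivity) (gcd_two_mul_mul_sub_two_of_even hpe hp2 hcase).dvd
    exact Nat.div_le_of_le_mul (by nlinarith)
  · have := two_mul_le (by positivity) (gcd_two_mul_mul_sub_two_dvd_four_mul_gcd q hp2)
    exact Nat.div_le_of_le_mul (by nlinarith)

theorem stmt_19 (p q m k k' : ℕ) (hp : 3 ≤ p) (hq : 3 ≤ q) (hm : 1 ≤ m)
    (hk : 0 < k)
    (hk' : IsLeast {j : ℕ | 0 < j ∧ 2 * p ∣ j * (q * (p - 2))} k')
    (hdvd : k' ∣ k) :
    (Odd p → Odd q → m * k / 2 ≥ m * p / Nat.gcd p q) ∧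
    (Even p → (Even q ∨ 4 ∣ p) → m * k ≥ m * p / Nat.gcd p q) ∧
    (p % 4 = 2 → Odd q → m * k ≥ m * p / (2 * Nat.gcd p q)) :=
  stmt_19_general p q m k k' hp hk hk' hdvd
end
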